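/- arXiv:2106.00578 — 4 statements merged into one kernel-verified Lean document; each statement's English description precedes it below -/
import Mathlib

section
/- Fix an integer q ≥ 1, let a_m denote the number of unbordered words of length m over a q-letter alphabet, and let α = ∑_{m≥0} a_m X^m ∈ ℤ[[X]]. Then (1 − qX)·α(X) = 2 − α(X²), where α(X²) denotes the power series obtained from α by substituting X² for X. -/
/-
A bordered word has a border of at most half its length (the two occurrences of a longer border
overlap in a shorter one), so whether a word is unbordered depends only on its prefix and suffix of
about half its length. Hence inserting any letter in the middle of an unbordered word of length
`2k` yields every unbordered word of length `2k + 1` exactly once: `a (2k+1) = q a (2k)`.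
Inserting a letter `c` just after the middle of an unbordered word `w` of length `2k + 1` yields
an unbordered word unless the result is a square `(c s)(c s)`, i.e. `w = c s s`; and `w = c s s`
is unbordered iff `c s` is. So `a (2k+2) + a (k+1) = q a (2k+1)`. Together with `a 0 = 1` these
recurrences are the coefficientwise form of `(1 - qX) α + α(X²) = 2`.
-/

/-- `B` is a border of the word `W`: a nonempty proper suffix of `W`
(proper meaning of length strictly less than `|W|`) that is also a prefix of `W`. -/
def IsBorder {α : Type*} (B W : List α) : Prop :=
  B ≠ [] ∧ B.length < W.length ∧ B <:+ W ∧ B <+: W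

/-- A word is unbordered if it has no border. -/
def Unbordered {α : Type*} (W : List α) : Prop :=
  ∀ B, ¬ IsBorder B W

/-- The number of unbordered words of length `m` over a `q`-letter alphabet. -/
noncomputable def countUnbordered (q m : ℕ) : ℕ :=
  Nat.card {w : List (Fin q) // w.length = m ∧ Unbordered w}

/-- Substituting `X²` for `X` in a formal power series over `ℤ`:
the coefficient of `X^m` in `φ(X²)` is the coefficient of `X^(m/2)` in `φ` when `m` is
even, and `0` otherwise. -/
noncomputable def substXsq (φ : PowerSeries ℤ) : PowerSeries ℤ :=
  PowerSeries.mk fun m => if 2 ∣ m then PowerSeries.coeff (m / 2) φ else 0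

section Words

variable {α : Type*}

namespace List

variable {w : List α} {i : ℕ}

theorem insertIdx_eq_take_append_cons_drop (h : i ≤ w.length) (c : α) :
    w.insertIdx i c = w.take i ++ c :: w.drop i := by
  induction w generalizing i with
  | nil => simp_all
  | cons a w ih => cases i <;> simp_all

theorem take_prefix_insertIdx (w : List α) (i : ℕ) (c : α) : w.take i <+: w.insertIdx i c :=
  take_insertIdx_eq_take_of_le w c i i le_rfl ▸ take_prefix _ _

theorem drop_suffix_insertIdx (h : i ≤ w.length) (c : α) : w.drop i <:+ w.insertIdx i c :=
  insertIdx_eq_take_append_cons_drop h c ▸ (suffix_cons _ _).trans (suffix_append _ _)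

theorem cons_drop_append_drop_eq {c : α} (h : w.take i = c :: w.drop i) :
    c :: w.drop i ++ w.drop i = w := by
  rw [← h, take_append_drop]

end List

namespace IsBorder

variable {B C W : List α}

theorem trans (hC : IsBorder C B) (hB : IsBorder B W) : IsBorder C W :=
  ⟨hC.1, hC.2.1.trans hB.2.1, hC.2.2.1.trans hB.2.2.1, hC.2.2.2.trans hB.2.2.2⟩

theorem drop_isBorder (h : IsBorder B W) (hlong : W.length < 2 * B.length) :
    IsBorder (B.drop (W.length - B.length)) B := by
  obtain ⟨-, hlt, hsuf, hpre⟩ := h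
  have hB : B.drop (W.length - B.length) = B.take (2 * B.length - W.length) := by
    have htake := List.prefix_iff_eq_take.mp hpre
    have hdrop := List.suffix_iff_eq_drop.mp hsuf
    set b := B.length
    calc B.drop (W.length - b) = (W.take b).drop (W.length - b) := by rw [← htake]
      _ = (W.drop (W.length - b)).take (2 * b - W.length) := by
        rw [List.drop_take]; congr 1; omega
      _ = B.take (2 * b - W.length) := by rw [← hdrop]
  refine ⟨?_, ?_, List.drop_suffix _ _, hB ▸ List.take_prefix _ _⟩
  · rw [← List.length_pos_iff, List.length_drop]; omega
  · rw [List.length_drop]; omega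

theorem exists_two_mul_length_le (h : IsBorder B W) :
    ∃ B', IsBorder B' W ∧ 2 * B'.length ≤ W.length := by
  induction hn : B.length using Nat.strong_induction_on generalizing B with
  | _ n ih =>
    by_cases hshort : 2 * B.length ≤ W.length
    · exact ⟨B, h, hshort⟩
    · have hdrop := h.drop_isBorder (by omega)
      exact ih _ (hn ▸ hdrop.2.1) (hdrop.trans h) rfl

theorem of_prefix_of_suffix {P S W' : List α} (h : IsBorder B W) (hP : P <+: W) (hP' : P <+: W')
    (hS : S <:+ W) (hS' : S <:+ W') (hBP : B.length ≤ P.length) (hBS : B.length ≤ S.length)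
    (hlt : B.length < W'.length) : IsBorder B W' :=
  ⟨h.1, hlt, (List.suffix_of_suffix_length_le h.2.2.1 hS hBS).trans hS',
    (List.prefix_of_prefix_length_le h.2.2.2 hP hBP).trans hP'⟩

end IsBorder

theorem not_unbordered_iff {W : List α} :
    ¬ Unbordered W ↔ ∃ B, IsBorder B W ∧ 2 * B.length ≤ W.length := by
  refine ⟨fun h => ?_, fun ⟨B, hB, _⟩ h => h B hB⟩
  simp only [Unbordered, not_forall, not_not] at h
  obtain ⟨B, hB⟩ := h
  exact hB.exists_two_mul_length_le

theorem Unbordered.of_prefix_of_suffix {P S W W' : List α} (h : Unbordered W)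
    (hP : P <+: W) (hP' : P <+: W') (hS : S <:+ W) (hS' : S <:+ W')
    (hPS : P.length + S.length ≤ W.length) (hWP : W'.length ≤ 2 * P.length + 1)
    (hWS : W'.length ≤ 2 * S.length + 1) : Unbordered W' := by
  by_contra hW'
  obtain ⟨B, hB, hshort⟩ := not_unbordered_iff.mp hW'
  have hpos : 0 < B.length := List.length_pos_iff.mpr hB.1
  exact h B (hB.of_prefix_of_suffix hP' hP hS' hS (by omega) (by omega) (by omega))

section Insertion

variable {w : List α} {i k : ℕ}

theorem Unbordered.insertIdx (h : Unbordered w) (hw : w.length = 2 * i) (c : α) :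
    Unbordered (w.insertIdx i c) :=
  h.of_prefix_of_suffix (List.take_prefix _ _) (List.take_prefix_insertIdx w i c)
    (List.drop_suffix _ _) (List.drop_suffix_insertIdx (by omega) c) (by simp; omega)
    (by simp [List.length_insertIdx_of_le_length (show i ≤ w.length by omega)]; omega)
    (by simp [List.length_insertIdx_of_le_length (show i ≤ w.length by omega)]; omega)

theorem Unbordered.of_insertIdx {c : α} (h : Unbordered (w.insertIdx i c))
    (h₁ : w.length ≤ 2 * i + 1) (h₂ : 2 * i ≤ w.length + 1) : Unbordered w :=
  have hi : i ≤ w.length := by omega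
  h.of_prefix_of_suffix (List.take_prefix_insertIdx w i c) (List.take_prefix _ _)
    (List.drop_suffix_insertIdx hi c) (List.drop_suffix _ _)
    (by simp [List.length_insertIdx_of_le_length hi]; omega) (by simp; omega) (by simp; omega)

theorem unbordered_insertIdx_iff (hw : w.length = 2 * i) (c : α) :
    Unbordered (w.insertIdx i c) ↔ Unbordered w :=
  ⟨fun h => h.of_insertIdx (by omega) (by omega), fun h => h.insertIdx hw c⟩

theorem Unbordered.not_unbordered_insertIdx_iff (hu : Unbordered w) (hw : w.length = 2 * k + 1)
    (c : α) : ¬ Unbordered (w.insertIdx (k + 1) c) ↔ w.take (k + 1) = c :: w.drop (k + 1) := by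
  have hk : k + 1 ≤ w.length := by omega
  have hins := List.insertIdx_eq_take_append_cons_drop hk c
  have htake : (w.take (k + 1)).length = k + 1 := by simp; omega
  constructor
  · intro hW
    obtain ⟨B, hB, hshort⟩ := not_unbordered_iff.mp hW
    rw [List.length_insertIdx_of_le_length hk] at hshort
    have hBk : B.length = k + 1 := by
      by_contra hne
      exact hu B (hB.of_prefix_of_suffix (List.take_prefix_insertIdx w _ c) (List.take_prefix _ _)
        (List.drop_suffix_insertIdx hk c) (List.drop_suffix _ _) (by simp; omega) (by simp; omega)
        (by omega))
    have hpre := List.prefix_iff_eq_take.mp hB.2.2.2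
    have hsuf := List.suffix_iff_eq_drop.mp hB.2.2.1
    rw [hins, hBk, List.take_left' htake] at hpre
    rw [hins, hBk, List.length_append, htake, List.length_cons, List.length_drop,
      show k + 1 + (w.length - (k + 1) + 1) - (k + 1) = k + 1 by omega,
      List.drop_left' htake] at hsuf
    exact hpre.symm.trans hsuf
  · intro hsq hW
    refine hW (w.take (k + 1)) ⟨?_, ?_, ?_, ?_⟩
    · rw [← List.length_pos_iff]; omega
    · rw [List.length_insertIdx_of_le_length hk]; omega
    · rw [hins, ← hsq]; exact List.suffix_append _ _
    · exact List.take_prefix_insertIdx w _ c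

theorem unbordered_append_tail_iff (u : List α) : Unbordered (u ++ u.tail) ↔ Unbordered u := by
  refine ⟨fun h => h.of_prefix_of_suffix (List.prefix_append _ _) (List.prefix_refl _)
    (List.suffix_append _ _) (List.tail_suffix _) (by simp) (by omega) (by simp; omega),
    fun h => ?_⟩
  by_contra hW
  obtain ⟨B, hB, hshort⟩ := not_unbordered_iff.mp hW
  have hpos := List.length_pos_iff.mpr hB.1
  simp only [List.length_append, List.length_tail] at hshort
  exact h B (hB.of_prefix_of_suffix (List.prefix_append _ _) (List.prefix_refl _)
    (List.suffix_append _ _) (List.tail_suffix _) (by omega) (by simp; omega) (by omega))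

end Insertion

abbrev UnborderedWords (α : Type*) (m : ℕ) : Type _ :=
  {w : List α // w.length = m ∧ Unbordered w}

namespace UnborderedWords

instance [Finite α] (m : ℕ) : Finite (UnborderedWords α m) :=
  ((List.finite_length_eq α m).subset fun _ hw => hw.1).to_subtype

theorem card_zero : Nat.card (UnborderedWords α 0) = 1 := by
  rw [Nat.card_eq_one_iff_unique]
  refine ⟨⟨fun ⟨w, hw, _⟩ ⟨w', hw', _⟩ => ?_⟩,
    ⟨⟨[], rfl, fun B hB => by simp [IsBorder] at hB⟩⟩⟩
  simp_all [List.eq_nil_of_length_eq_zero]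

def insertMiddleEquiv (k : ℕ) :
    UnborderedWords α (2 * k) × α ≃ UnborderedWords α (2 * k + 1) where
  toFun p := ⟨p.1.1.insertIdx k p.2,
    by rw [List.length_insertIdx_of_le_length (by rw [p.1.2.1]; omega), p.1.2.1],
    p.1.2.2.insertIdx p.1.2.1 p.2⟩
  invFun W :=
    have hk : k < W.1.length := by rw [W.2.1]; omega
    have hlen : (W.1.eraseIdx k).length = 2 * k := by rw [List.length_eraseIdx_of_lt hk, W.2.1]; rfl
    (⟨W.1.eraseIdx k, hlen, (unbordered_insertIdx_iff hlen W.1[k]).mp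
      (by rw [List.insertIdx_eraseIdx_getElem]; exact W.2.2)⟩, W.1[k])
  left_inv := by
    rintro ⟨⟨w, hw, hu⟩, c⟩
    simp [List.eraseIdx_insertIdx_self, List.getElem_insertIdx_self]
  right_inv := by
    rintro ⟨W, hW, hu⟩
    simp [List.insertIdx_eraseIdx_getElem]

def insertAfterMiddleEquiv (k : ℕ) :
    {p : UnborderedWords α (2 * k + 1) × α // Unbordered (p.1.1.insertIdx (k + 1) p.2)} ≃
      UnborderedWords α (2 * k + 2) where
  toFun p := ⟨p.1.1.1.insertIdx (k + 1) p.1.2,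
    by rw [List.length_insertIdx_of_le_length (by rw [p.1.1.2.1]; omega), p.1.1.2.1], p.2⟩
  invFun W :=
    have hk : k + 1 < W.1.length := by rw [W.2.1]; omega
    have hlen : (W.1.eraseIdx (k + 1)).length = 2 * k + 1 := by
      rw [List.length_eraseIdx_of_lt hk, W.2.1]; rfl
    have hW : Unbordered ((W.1.eraseIdx (k + 1)).insertIdx (k + 1) W.1[k + 1]) := by
      rw [List.insertIdx_eraseIdx_getElem]; exact W.2.2
    ⟨(⟨W.1.eraseIdx (k + 1), hlen, hW.of_insertIdx (by omega) (by omega)⟩, W.1[k + 1]), hW⟩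
  left_inv := by
    rintro ⟨⟨⟨w, hw, hu⟩, c⟩, hW⟩
    simp [List.eraseIdx_insertIdx_self, List.getElem_insertIdx_self]
  right_inv := by
    rintro ⟨W, hW, hu⟩
    simp [List.insertIdx_eraseIdx_getElem]

def squareEquiv (k : ℕ) :
    {p : UnborderedWords α (2 * k + 1) × α // ¬ Unbordered (p.1.1.insertIdx (k + 1) p.2)} ≃
      UnborderedWords α (k + 1) where
  toFun p :=
    have hsq := (p.1.1.2.2.not_unbordered_insertIdx_iff p.1.1.2.1 p.1.2).mp p.2
    ⟨p.1.2 :: p.1.1.1.drop (k + 1), by simp [p.1.1.2.1]; omega,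
      (unbordered_append_tail_iff _).mp
        (by rw [List.tail_cons, List.cons_drop_append_drop_eq hsq]; exact p.1.1.2.2)⟩
  invFun u :=
    have hne : u.1 ≠ [] := by rw [← List.length_pos_iff, u.2.1]; omega
    have hlen : (u.1 ++ u.1.tail).length = 2 * k + 1 := by simp [u.2.1]; omega
    have hu : Unbordered (u.1 ++ u.1.tail) := (unbordered_append_tail_iff _).mpr u.2.2
    ⟨(⟨u.1 ++ u.1.tail, hlen, hu⟩, u.1.head hne), (hu.not_unbordered_insertIdx_iff hlen _).mpr
      (by rw [List.take_left' u.2.1, List.drop_left' u.2.1, List.cons_head_tail hne])⟩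
  left_inv := by
    rintro ⟨⟨⟨w, hw, hu⟩, c⟩, hW⟩
    have hsq := (hu.not_unbordered_insertIdx_iff hw c).mp hW
    simp [List.cons_drop_append_drop_eq hsq]
  right_inv := by
    rintro ⟨u, hu, -⟩
    simp [List.drop_left' hu]

open Classical in
noncomputable def insertAfterMiddleSumEquiv (k : ℕ) :
    UnborderedWords α (2 * k + 1) × α ≃
      UnborderedWords α (2 * k + 2) ⊕ UnborderedWords α (k + 1) :=
  (Equiv.sumCompl _).symm.trans ((insertAfterMiddleEquiv k).sumCongr (squareEquiv k))

theorem card_two_mul_add_one (k : ℕ) :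
    Nat.card (UnborderedWords α (2 * k + 1)) =
      Nat.card (UnborderedWords α (2 * k)) * Nat.card α := by
  rw [← Nat.card_prod, Nat.card_congr (insertMiddleEquiv k)]

theorem card_two_mul_add_two [Finite α] (k : ℕ) :
    Nat.card (UnborderedWords α (2 * k + 2)) + Nat.card (UnborderedWords α (k + 1)) =
      Nat.card (UnborderedWords α (2 * k + 1)) * Nat.card α := by
  rw [← Nat.card_prod, ← Nat.card_sum, Nat.card_congr (insertAfterMiddleSumEquiv k)]

end UnborderedWords

end Words

open PowerSeries in
theorem one_sub_C_mul_X_mul_mk_eq_two_sub_substXsq {a : ℕ → ℤ} {c : ℤ} (h₀ : a 0 = 1)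
    (hodd : ∀ k, a (2 * k + 1) = a (2 * k) * c)
    (heven : ∀ k, a (2 * k + 2) + a (k + 1) = a (2 * k + 1) * c) :
    (1 - C c * X) * mk a = 2 - substXsq (mk a) := by
  have coeff_two (n : ℕ) : coeff n (2 : PowerSeries ℤ) = if n = 0 then 2 else 0 := by
    rw [← map_ofNat C 2, coeff_C]
  ext n
  rw [sub_mul, one_mul, map_sub, map_sub, mul_assoc, coeff_C_mul, coeff_two, substXsq, coeff_mk,
    coeff_mk]
  rcases n with _ | n
  · simp [h₀]
  · rw [coeff_succ_X_mul, coeff_mk]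
    rcases Nat.even_or_odd' n with ⟨k, rfl | rfl⟩
    · simp [hodd, mul_comm c]
    · rw [if_neg (by omega), if_pos (by omega), show (2 * k + 1 + 1) / 2 = k + 1 by omega,
        coeff_mk]
      linarith [heven k]

theorem countUnbordered_zero (q : ℕ) : countUnbordered q 0 = 1 :=
  UnborderedWords.card_zero

theorem countUnbordered_two_mul_add_one (q k : ℕ) :
    countUnbordered q (2 * k + 1) = countUnbordered q (2 * k) * q := by
  rw [countUnbordered, countUnbordered, UnborderedWords.card_two_mul_add_one, Nat.card_fin]

theorem countUnbordered_two_mul_add_two (q k : ℕ) :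
    countUnbordered q (2 * k + 2) + countUnbordered q (k + 1) =
      countUnbordered q (2 * k + 1) * q := by
  rw [countUnbordered, countUnbordered, countUnbordered, UnborderedWords.card_two_mul_add_two,
    Nat.card_fin]

theorem unbordered_gf_functional_equation_general (q : ℕ)
    (α : PowerSeries ℤ)
    (hα : α = PowerSeries.mk fun m => (countUnbordered q m : ℤ)) :
    (1 - (q : PowerSeries ℤ) * PowerSeries.X) * α = 2 - substXsq α := by
  rw [hα, ← map_natCast PowerSeries.C q]
  apply one_sub_C_mul_X_mul_mk_eq_two_sub_substXsq
  · exact_mod_cast countUnbordered_zero q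
  · exact_mod_cast countUnbordered_two_mul_add_one q
  · exact_mod_cast countUnbordered_two_mul_add_two q

/-- For `q ≥ 1`, the generating function `α = ∑ a_m X^m ∈ ℤ[[X]]` of the numbers `a_m`
of unbordered words of length `m` over a `q`-letter alphabet satisfies
`(1 − qX)·α(X) = 2 − α(X²)`. -/
theorem unbordered_gf_functional_equation (q : ℕ) (hq : 1 ≤ q)
    (α : PowerSeries ℤ)
    (hα : α = PowerSeries.mk fun m => (countUnbordered q m : ℤ)) :
    (1 - (q : PowerSeries ℤ) * PowerSeries.X) * α = 2 - substXsq α :=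
  unbordered_gf_functional_equation_general q α hα
end

section
/- Fix an integer q ≥ 2, let b_m denote the number of 1-unbordered words of length m over ℤ/qℤ, and let β = ∑_{m≥0} b_m X^m ∈ ℤ[[X]]. Define h(0) := 1 and, for n ≥ 1, h(n) := (−q)^{s(n)} · (1 − (−2)^{k(n)}), where s(n) is the sum of the binary digits of n and k(n) is the 2-adic valuation of n. Then for every K ≥ 0 and every n with 0 ≤ n < 2^{K+1}, the coefficient of X^n in the power series β(X) · ∏_{j=0}^{K} (1 − q·X^{2^j}) equals h(n). -/
/-- For a word `W` over `ℤ/qℤ`, `addOneFirst W` is the word `W'` obtained by adding `1`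
to the first letter of `W` (and the empty word for the empty word). -/
def addOneFirst {q : ℕ} : List (ZMod q) → List (ZMod q)
  | [] => []
  | x :: xs => (x + 1) :: xs

/-- A word `W` over `ℤ/qℤ` is 1-unbordered if no nonempty proper suffix of `W` is equal
to a prefix of `W` or to a prefix of `W'` (where `W'` is `W` with `1` added to its first
letter). -/
def OneUnbordered {q : ℕ} (W : List (ZMod q)) : Prop :=
  ∀ S : List (ZMod q), S ≠ [] → S.length < W.length → S <:+ W →
    ¬ S <+: W ∧ ¬ S <+: addOneFirst W

/-- The number of 1-unbordered words of length `m` over `ℤ/qℤ`. -/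
noncomputable def countOneUnbordered (q m : ℕ) : ℕ :=
  Nat.card {w : List (ZMod q) // w.length = m ∧ OneUnbordered w}

/-!
A nonempty proper suffix `w.drop t` of `w` is a prefix of `w` or of `w'` exactly when `t` is a
"`1`-period" of `w`. Such periods can be doubled, so only those with `t ≥ |w| / 2` matter, and
these correspond (via `t ↦ t - 1`) to those of the word with its middle letter erased, except for
the period `t = m` of a word of length `2m`, which forces `w = u ++ u` or `w = u ++ u'`.
Counting gives `b(2m+1) = q b(2m)` and `b(2m) + 2 b(m) = q b(2m-1)`, that is,
`(1 - qX) β(X) = 3 - 2 β(X²)`.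
Since `P_K = ∏_{j<K} (1 - qX^(2^j)) = (1 - qX) P_{K-1}(X²)`, this yields
`β P_K = 3 P_{K-1}(X²) - 2 (β P_{K-1})(X²)`; by uniqueness of binary expansions `P_K` has
coefficients `(-q)^(s n)` below `2^K`, and the closed form obeys the same recursion.
-/

section Words

variable {q : ℕ}

/-- `w` agrees with its shift by `t`, except that `w[t]` may also be `w[0] + 1`. -/
def IsOnePeriod (w : List (ZMod q)) (t : ℕ) : Prop :=
  w.drop t <+: w ∨ w.drop t <+: addOneFirst w

@[simp]
lemma length_addOneFirst (w : List (ZMod q)) : (addOneFirst w).length = w.length := by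
  cases w <;> rfl

lemma take_addOneFirst (w : List (ZMod q)) (k : ℕ) :
    (addOneFirst w).take k = addOneFirst (w.take k) := by
  cases w <;> cases k <;> rfl

lemma drop_addOneFirst (w : List (ZMod q)) {t : ℕ} (ht : 0 < t) :
    (addOneFirst w).drop t = w.drop t := by
  obtain ⟨t, rfl⟩ := Nat.exists_eq_add_one_of_ne_zero ht.ne'
  cases w <;> rfl

@[simp]
lemma tail_addOneFirst (w : List (ZMod q)) : (addOneFirst w).tail = w.tail := by
  cases w <;> rfl

lemma addOneFirst_ne_self [Nontrivial (ZMod q)] {u : List (ZMod q)} (hu : u ≠ []) :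
    addOneFirst u ≠ u := by
  cases u with
  | nil => exact absurd rfl hu
  | cons a u => simp [addOneFirst]

lemma oneUnbordered_iff_forall_not_isOnePeriod (w : List (ZMod q)) :
    OneUnbordered w ↔ ∀ t, 0 < t → t < w.length → ¬ IsOnePeriod w t := by
  constructor
  · intro hw t ht htw hper
    have hne : w.drop t ≠ [] := by simpa using htw
    obtain ⟨h₁, h₂⟩ := hw _ hne (by simp; omega) (w.drop_suffix t)
    exact hper.elim h₁ h₂
  · intro hw S hS hSw hsuf
    rw [List.suffix_iff_eq_drop] at hsuf
    have hSpos : 0 < S.length := List.length_pos_iff.mpr hS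
    rw [hsuf]
    exact not_or.mp (hw _ (by omega) (by omega))

lemma IsOnePeriod.two_mul {w : List (ZMod q)} {t : ℕ} (hper : IsOnePeriod w t) (ht : 0 < t) :
    IsOnePeriod w (2 * t) := by
  have doubled : ∀ v, v.drop t = w.drop t → w.drop t <+: v → w.drop (2 * t) <+: v := by
    intro v hv hpre
    have : w.drop (2 * t) = (w.drop t).take ((w.drop t).length - t) := by
      rw [_root_.two_mul, ← List.drop_drop]
      conv_lhs => rw [List.prefix_iff_eq_take.mp hpre, List.drop_take, hv]
    exact this ▸ (List.take_prefix _ _).trans hpre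
  exact hper.imp (doubled w rfl) (doubled _ (drop_addOneFirst w ht))

/-- Since `1`-periods can be doubled, it suffices to look at those `t ≥ m = ⌈|w| / 2⌉`. -/
lemma oneUnbordered_iff_forall_ge {w : List (ZMod q)} {m : ℕ} (hm : w.length ≤ 2 * m)
    (hm' : 2 * m ≤ w.length + 1) :
    OneUnbordered w ↔ ∀ t, m ≤ t → t < w.length → ¬ IsOnePeriod w t := by
  rw [oneUnbordered_iff_forall_not_isOnePeriod]
  refine ⟨fun hw t hmt htw => hw t (by omega) htw, fun hw t ht htw hper => ?_⟩
  induction hd : w.length - t using Nat.strong_induction_on generalizing t with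
  | _ d ih =>
    by_cases hlarge : m ≤ t
    · exact hw t hlarge htw hper
    · exact ih (w.length - 2 * t) (by omega) (2 * t) (by omega) (by omega) (hper.two_mul ht) rfl

lemma isOnePeriod_iff_take {w : List (ZMod q)} {t k : ℕ} (hk : w.length ≤ t + k) :
    IsOnePeriod w t ↔ w.drop t <+: w.take k ∨ w.drop t <+: addOneFirst (w.take k) := by
  have hlen : (w.drop t).length ≤ k := by simp; omega
  rw [IsOnePeriod, ← take_addOneFirst, List.prefix_take_iff, List.prefix_take_iff]
  simp only [hlen, and_true]

lemma isOnePeriod_eraseIdx_iff {w : List (ZMod q)} {m t : ℕ} (hmt : m < t) (htw : t < w.length)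
    (hw : w.length ≤ t + m) : IsOnePeriod (w.eraseIdx m) (t - 1) ↔ IsOnePeriod w t := by
  have hdrop : (w.eraseIdx m).drop (t - 1) = w.drop t := by
    rw [List.eraseIdx_eq_take_drop_succ, List.drop_append,
      List.drop_eq_nil_of_le (by simp; omega), List.nil_append, List.drop_drop, List.length_take]
    congr 1
    omega
  have hw' : (w.eraseIdx m).length ≤ t - 1 + m := by
    rw [List.length_eraseIdx]; split <;> omega
  rw [isOnePeriod_iff_take hw, isOnePeriod_iff_take hw', hdrop,
    List.take_eraseIdx_eq_take_of_le _ _ _ le_rfl]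

lemma isOnePeriod_append_tail_iff {u : List (ZMod q)} (hu : u ≠ []) {s : ℕ} (hs : 0 < s) :
    IsOnePeriod (u ++ u.tail) (u.length - 1 + s) ↔ IsOnePeriod u s := by
  have hupos : 0 < u.length := List.length_pos_iff.mpr hu
  have hdrop : (u ++ u.tail).drop (u.length - 1 + s) = u.drop s := by
    rw [List.drop_append, List.drop_eq_nil_of_le (by omega), List.nil_append, ← List.drop_one,
      List.drop_drop]
    congr 1
    omega
  rw [isOnePeriod_iff_take (k := u.length) (by simp; omega),
    isOnePeriod_iff_take (k := u.length) (by omega), hdrop, List.take_left' rfl, List.take_length]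

lemma oneUnbordered_append_tail_iff {u : List (ZMod q)} (hu : u ≠ []) :
    OneUnbordered (u ++ u.tail) ↔ OneUnbordered u := by
  have hupos : 0 < u.length := List.length_pos_iff.mpr hu
  have hlen : (u ++ u.tail).length = 2 * u.length - 1 := by simp; omega
  rw [oneUnbordered_iff_forall_ge (m := u.length) (by omega) (by omega),
    oneUnbordered_iff_forall_not_isOnePeriod, hlen]
  constructor
  · intro hw s hs hsu hper
    exact hw _ (by omega) (by omega) ((isOnePeriod_append_tail_iff hu hs).mpr hper)
  · intro hw t ht htw hper
    rw [show t = u.length - 1 + (t + 1 - u.length) by omega,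
      isOnePeriod_append_tail_iff hu (by omega)] at hper
    exact hw _ (by omega) (by omega) hper

lemma forall_not_isOnePeriod_eraseIdx_iff {w : List (ZMod q)} {m : ℕ} (hm : m < w.length)
    (hw : w.length ≤ 2 * m + 1) :
    (∀ t, m ≤ t → t < (w.eraseIdx m).length → ¬ IsOnePeriod (w.eraseIdx m) t) ↔
      ∀ t, m < t → t < w.length → ¬ IsOnePeriod w t := by
  have hlen : (w.eraseIdx m).length = w.length - 1 := by
    rw [List.length_eraseIdx]; split <;> omega
  rw [hlen]
  constructor
  · intro h t hmt htw hper
    exact h (t - 1) (by omega) (by omega)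
      ((isOnePeriod_eraseIdx_iff hmt htw (by omega)).mpr hper)
  · intro h t hmt htw hper
    rw [← Nat.add_sub_cancel t 1,
      isOnePeriod_eraseIdx_iff (by omega) (by omega) (by omega)] at hper
    exact h (t + 1) (by omega) (by omega) hper

lemma oneUnbordered_eraseIdx_iff_of_length_eq_two_mul_add_one {w : List (ZMod q)} {m : ℕ}
    (hw : w.length = 2 * m + 1) : OneUnbordered (w.eraseIdx m) ↔ OneUnbordered w := by
  have hlen : (w.eraseIdx m).length = 2 * m := by
    rw [List.length_eraseIdx]; split <;> omega
  rw [oneUnbordered_iff_forall_ge (m := m) (by omega) (by omega),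
    oneUnbordered_iff_forall_ge (m := m + 1) (by omega) (by omega)]
  exact forall_not_isOnePeriod_eraseIdx_iff (by omega) hw.le

lemma oneUnbordered_iff_of_length_eq_two_mul {w : List (ZMod q)} {m : ℕ} (hm : 0 < m)
    (hw : w.length = 2 * m) :
    OneUnbordered w ↔ OneUnbordered (w.eraseIdx m) ∧ ¬ IsOnePeriod w m := by
  have hlen : (w.eraseIdx m).length = 2 * m - 1 := by
    rw [List.length_eraseIdx]; split <;> omega
  rw [oneUnbordered_iff_forall_ge (m := m) (by omega) (by omega),
    oneUnbordered_iff_forall_ge (m := m) (by omega) (by omega),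
    forall_not_isOnePeriod_eraseIdx_iff (by omega) (by omega)]
  constructor
  · intro h
    exact ⟨fun t hmt htw => h t hmt.le htw, h m le_rfl (by omega)⟩
  · rintro ⟨h, hper⟩ t hmt htw
    rcases hmt.eq_or_lt with rfl | hlt
    · exact hper
    · exact h t hlt htw

lemma isOnePeriod_append_iff {u v : List (ZMod q)} (h : v.length = u.length) :
    IsOnePeriod (u ++ v) u.length ↔ v = u ∨ v = addOneFirst u := by
  rw [isOnePeriod_iff_take (k := u.length) (by simp [h]), List.drop_left' rfl,
    List.take_left' rfl]
  refine or_congr ⟨fun hp => hp.eq_of_length h, fun hv => hv ▸ List.prefix_rfl⟩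
    ⟨fun hp => hp.eq_of_length (by simp [h]), fun hv => hv ▸ List.prefix_rfl⟩

lemma eraseIdx_append_of_tail_eq {α : Type*} {u v : List α} (huv : v.tail = u.tail) :
    (u ++ v).eraseIdx u.length = u ++ u.tail := by
  rw [List.eraseIdx_append_of_length_le le_rfl, Nat.sub_self, List.eraseIdx_zero, huv]

end Words

section Counting

lemma finite_words {α : Type*} [Finite α] (n : ℕ) (P : List α → Prop) :
    Finite {w : List α // w.length = n ∧ P w} :=
  ((List.finite_length_eq α n).subset fun _ hw => hw.1).to_subtype

def eraseIdxEquiv {α : Type*} (P : List α → Prop) {m n : ℕ} (hmn : m ≤ n) :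
    {w : List α // w.length = n + 1 ∧ P (w.eraseIdx m)} ≃
      {v : List α // v.length = n ∧ P v} × α where
  toFun w := (⟨w.1.eraseIdx m, by rw [List.length_eraseIdx_of_lt (by omega), w.2.1]; rfl,
    w.2.2⟩, w.1[m]'(by omega))
  invFun p := ⟨p.1.1.insertIdx m p.2,
    by rw [List.length_insertIdx_of_le_length (by rw [p.1.2.1]; exact hmn), p.1.2.1], by
      rw [List.eraseIdx_insertIdx_self]; exact p.1.2.2⟩
  left_inv w := Subtype.ext (List.insertIdx_eraseIdx_getElem _)
  right_inv p :=
    Prod.ext (Subtype.ext (List.eraseIdx_insertIdx_self _)) (List.getElem_insertIdx_self _)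

lemma card_eraseIdx {α : Type*} (P : List α → Prop) {m n : ℕ} (hmn : m ≤ n) :
    Nat.card {w : List α // w.length = n + 1 ∧ P (w.eraseIdx m)} =
      Nat.card {v : List α // v.length = n ∧ P v} * Nat.card α := by
  rw [Nat.card_congr (eraseIdxEquiv P hmn), Nat.card_prod]

variable {q : ℕ}

lemma oneUnbordered_nil : OneUnbordered ([] : List (ZMod q)) :=
  fun _ _ h => absurd h (Nat.not_lt_zero _)

lemma countOneUnbordered_zero : countOneUnbordered q 0 = 1 := by
  rw [countOneUnbordered, Nat.card_eq_one_iff_unique]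
  refine ⟨⟨fun w v => Subtype.ext ?_⟩, ⟨⟨[], rfl, oneUnbordered_nil⟩⟩⟩
  rw [List.length_eq_zero_iff.mp w.2.1, List.length_eq_zero_iff.mp v.2.1]

lemma countOneUnbordered_two_mul_add_one (m : ℕ) :
    countOneUnbordered q (2 * m + 1) = countOneUnbordered q (2 * m) * q := by
  have h := card_eraseIdx (OneUnbordered (q := q)) (by omega : m ≤ 2 * m)
  rw [Nat.card_zmod] at h
  rw [countOneUnbordered, countOneUnbordered, ← h]
  exact Nat.card_congr (Equiv.subtypeEquivRight fun w => and_congr_right fun hw =>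
    (oneUnbordered_eraseIdx_iff_of_length_eq_two_mul_add_one hw).symm)

/-- The words of length `2m` with `1`-period `m` are `u ++ u` and `u ++ u'`, and erasing their
middle letter gives `u ++ u.tail`. -/
lemma card_oneUnbordered_eraseIdx_isOnePeriod (hq : 1 < q) {m : ℕ} (hm : 0 < m) :
    Nat.card {w : List (ZMod q) //
        (w.length = 2 * m ∧ OneUnbordered (w.eraseIdx m)) ∧ IsOnePeriod w m} =
      countOneUnbordered q m * 2 := by
  have : Fact (1 < q) := ⟨hq⟩
  let f : {u : List (ZMod q) // u.length = m ∧ OneUnbordered u} × Bool →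
      {w : List (ZMod q) //
        (w.length = 2 * m ∧ OneUnbordered (w.eraseIdx m)) ∧ IsOnePeriod w m} :=
    fun p => ⟨p.1.1 ++ if p.2 then addOneFirst p.1.1 else p.1.1, by
      obtain ⟨⟨u, rfl, hunb⟩, b⟩ := p
      have hne : u ≠ [] := List.ne_nil_of_length_pos hm
      have hlen : (if b then addOneFirst u else u).length = u.length := by cases b <;> simp
      refine ⟨⟨by simp [hlen]; omega, ?_⟩, ?_⟩
      · rw [eraseIdx_append_of_tail_eq (by cases b <;> simp), oneUnbordered_append_tail_iff hne]
        exact hunb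
      · rw [isOnePeriod_append_iff hlen]
        cases b <;> simp⟩
  have hf : Function.Bijective f := by
    constructor
    · rintro ⟨⟨u₁, hu₁⟩, b₁⟩ ⟨⟨u₂, hu₂⟩, b₂⟩ h
      obtain ⟨rfl, hv⟩ := List.append_inj (congrArg Subtype.val h) (hu₁.1.trans hu₂.1.symm)
      have hne : u₁ ≠ [] := List.ne_nil_of_length_pos (by omega)
      cases b₁ <;> cases b₂ <;>
        simp_all [addOneFirst_ne_self hne, (addOneFirst_ne_self hne).symm]
    · rintro ⟨w, ⟨hw, hunb⟩, hper⟩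
      obtain ⟨u, v, rfl, hu, hv⟩ : ∃ u v, w = u ++ v ∧ u.length = m ∧ v.length = m :=
        ⟨w.take m, w.drop m, (List.take_append_drop m w).symm, by simp; omega, by simp; omega⟩
      subst hu
      have hne : u ≠ [] := List.ne_nil_of_length_pos hm
      rw [isOnePeriod_append_iff hv] at hper
      have hunb' : OneUnbordered u := by
        rwa [eraseIdx_append_of_tail_eq (by rcases hper with rfl | rfl <;> simp),
          oneUnbordered_append_tail_iff hne] at hunb
      rcases hper with h | h <;> subst v
      · exact ⟨(⟨u, rfl, hunb'⟩, false), rfl⟩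
      · exact ⟨(⟨u, rfl, hunb'⟩, true), rfl⟩
  rw [← Nat.card_congr (Equiv.ofBijective f hf), Nat.card_prod,
    Nat.card_eq_fintype_card (α := Bool), Fintype.card_bool, countOneUnbordered]

lemma countOneUnbordered_two_mul (hq : 1 < q) {m : ℕ} (hm : 0 < m) :
    countOneUnbordered q (2 * m) + countOneUnbordered q m * 2 =
      countOneUnbordered q (2 * m - 1) * q := by
  classical
  have : NeZero q := ⟨by omega⟩
  set A := {w : List (ZMod q) // w.length = 2 * m ∧ OneUnbordered (w.eraseIdx m)}
  have : Finite A := finite_words _ _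
  have hA : Nat.card A = countOneUnbordered q (2 * m - 1) * q := by
    have h := card_eraseIdx (OneUnbordered (q := q)) (m := m) (n := 2 * m - 1) (by omega)
    rwa [Nat.sub_add_cancel (by omega), Nat.card_zmod] at h
  have hsplit : Nat.card A = Nat.card {x : A // ¬ IsOnePeriod x.1 m} +
      Nat.card {x : A // IsOnePeriod x.1 m} := by
    rw [← Nat.card_congr (Equiv.sumCompl fun x : A => IsOnePeriod x.1 m), Nat.card_sum, add_comm]
  have hnot : Nat.card {x : A // ¬ IsOnePeriod x.1 m} = countOneUnbordered q (2 * m) := by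
    refine Nat.card_congr ((Equiv.subtypeSubtypeEquivSubtypeInter
      (fun w => w.length = 2 * m ∧ OneUnbordered (w.eraseIdx m)) (¬ IsOnePeriod · m)).trans
      (Equiv.subtypeEquivRight fun w => ?_))
    constructor
    · rintro ⟨⟨hw, hunb⟩, hper⟩
      exact ⟨hw, (oneUnbordered_iff_of_length_eq_two_mul hm hw).2 ⟨hunb, hper⟩⟩
    · rintro ⟨hw, hunb⟩
      exact ⟨⟨hw, ((oneUnbordered_iff_of_length_eq_two_mul hm hw).1 hunb).1⟩,
        ((oneUnbordered_iff_of_length_eq_two_mul hm hw).1 hunb).2⟩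
  have hper : Nat.card {x : A // IsOnePeriod x.1 m} = countOneUnbordered q m * 2 := by
    rw [Nat.card_congr (Equiv.subtypeSubtypeEquivSubtypeInter
      (fun w => w.length = 2 * m ∧ OneUnbordered (w.eraseIdx m)) (IsOnePeriod · m)),
      card_oneUnbordered_eraseIdx_isOnePeriod hq hm]
  rw [← hnot, ← hper, ← hsplit, hA]

end Counting

section GeneratingFunction

open PowerSeries

lemma Nat.digits_two_sum_two_mul (m : ℕ) :
    (Nat.digits 2 (2 * m)).sum = (Nat.digits 2 m).sum := by
  rcases Nat.eq_zero_or_pos m with rfl | hm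
  · simp
  · simpa using congrArg List.sum (Nat.digits_add 2 one_lt_two 0 m two_pos (Or.inr hm.ne'))

lemma Nat.digits_two_sum_two_mul_add_one (m : ℕ) :
    (Nat.digits 2 (2 * m + 1)).sum = (Nat.digits 2 m).sum + 1 := by
  rw [add_comm, Nat.digits_add 2 one_lt_two 1 m one_lt_two (Or.inl one_ne_zero), List.sum_cons,
    add_comm]

variable {R : Type*} [CommRing R]

lemma coeff_succ_one_sub_C_mul_X_mul (a : R) (f : R⟦X⟧) (n : ℕ) :
    coeff (n + 1) ((1 - C a * X) * f) = coeff (n + 1) f - a * coeff n f := by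
  rw [sub_mul, one_mul, mul_assoc, map_sub, coeff_C_mul, coeff_succ_X_mul]

lemma coeff_two_mul_one_sub_C_mul_X_mul_expand (a : R) (f : R⟦X⟧) (m : ℕ) :
    coeff (2 * m) ((1 - C a * X) * expand 2 two_ne_zero f) = coeff m f := by
  rw [sub_mul, one_mul, mul_assoc, map_sub, coeff_C_mul, coeff_expand_mul]
  rcases m with _ | m
  · simp
  · rw [show 2 * (m + 1) = 2 * m + 1 + 1 by ring, coeff_succ_X_mul,
      coeff_expand_of_not_dvd _ _ _ (by omega), mul_zero, sub_zero]

lemma coeff_two_mul_add_one_one_sub_C_mul_X_mul_expand (a : R) (f : R⟦X⟧) (m : ℕ) :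
    coeff (2 * m + 1) ((1 - C a * X) * expand 2 two_ne_zero f) = -a * coeff m f := by
  rw [sub_mul, one_mul, mul_assoc, map_sub, coeff_C_mul, coeff_succ_X_mul, coeff_expand_mul,
    coeff_expand_of_not_dvd _ _ _ (by omega)]
  ring

lemma prod_one_sub_C_mul_X_pow_two_pow_succ (a : R) (K : ℕ) :
    ∏ j ∈ Finset.range (K + 1), (1 - C a * X ^ 2 ^ j) =
      (1 - C a * X) * expand 2 two_ne_zero (∏ j ∈ Finset.range K, (1 - C a * X ^ 2 ^ j)) := by
  rw [Finset.prod_range_succ', mul_comm, map_prod]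
  simp [pow_succ', pow_mul, expand_C]

lemma coeff_prod_one_sub_C_mul_X_pow_two_pow (a : R) {K n : ℕ} (hn : n < 2 ^ K) :
    coeff n (∏ j ∈ Finset.range K, (1 - C a * X ^ 2 ^ j)) = (-a) ^ (Nat.digits 2 n).sum := by
  induction K generalizing n with
  | zero => simp [Nat.lt_one_iff.mp hn]
  | succ K ih =>
    obtain ⟨m, rfl | rfl⟩ := Nat.even_or_odd' n <;> rw [pow_succ] at hn <;>
      rw [prod_one_sub_C_mul_X_pow_two_pow_succ]
    · rw [coeff_two_mul_one_sub_C_mul_X_mul_expand, ih (by omega), Nat.digits_two_sum_two_mul]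
    · rw [coeff_two_mul_add_one_one_sub_C_mul_X_mul_expand, ih (by omega),
        Nat.digits_two_sum_two_mul_add_one, pow_succ, mul_comm]

variable {q : ℕ}

lemma one_sub_C_mul_X_mul_mk_countOneUnbordered (hq : 1 < q) :
    (1 - C (q : ℤ) * X) * mk (fun m => (countOneUnbordered q m : ℤ)) =
      C 3 - C 2 * expand 2 two_ne_zero (mk fun m => (countOneUnbordered q m : ℤ)) := by
  ext (_ | n)
  · simp [countOneUnbordered_zero, map_ofNat]
  rw [coeff_succ_one_sub_C_mul_X_mul, map_sub, coeff_C, coeff_C_mul, if_neg n.succ_ne_zero,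
    coeff_mk, coeff_mk]
  obtain ⟨m, rfl | rfl⟩ := Nat.even_or_odd' n
  · rw [coeff_expand_of_not_dvd _ _ _ (by omega), countOneUnbordered_two_mul_add_one]
    push_cast
    ring
  · have h := countOneUnbordered_two_mul hq (m := m + 1) (by omega)
    rw [show 2 * (m + 1) - 1 = 2 * m + 1 by omega] at h
    zify at h
    rw [show 2 * m + 1 + 1 = 2 * (m + 1) by ring, coeff_expand_mul, coeff_mk]
    linear_combination h

lemma coeff_mk_countOneUnbordered_mul_prod (hq : 1 < q) {c : ℕ → ℤ}
    (hc_even : ∀ m, c (2 * m) = 3 * (-(q : ℤ)) ^ (Nat.digits 2 m).sum - 2 * c m)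
    (hc_odd : ∀ m, c (2 * m + 1) = 0) {K n : ℕ} (hn : n < 2 ^ K) :
    coeff n (mk (fun m => (countOneUnbordered q m : ℤ)) *
      ∏ j ∈ Finset.range K, (1 - C (q : ℤ) * X ^ 2 ^ j)) = c n := by
  induction K generalizing n with
  | zero =>
    have hc0 := hc_even 0
    simp only [mul_zero, Nat.digits_zero, List.sum_nil, pow_zero] at hc0
    simp [Nat.lt_one_iff.mp hn, countOneUnbordered_zero]
    omega
  | succ K ih =>
    have hβ := one_sub_C_mul_X_mul_mk_countOneUnbordered hq
    set β := mk (fun m => (countOneUnbordered q m : ℤ))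
    set P := ∏ j ∈ Finset.range K, (1 - C (q : ℤ) * X ^ 2 ^ j) with hP
    have hrec : β * ∏ j ∈ Finset.range (K + 1), (1 - C (q : ℤ) * X ^ 2 ^ j) =
        expand 2 two_ne_zero (C 3 * P - C 2 * (β * P)) := by
      rw [prod_one_sub_C_mul_X_pow_two_pow_succ, ← hP, mul_left_comm, ← mul_assoc, hβ]
      simp only [map_sub, map_mul, expand_C]
      ring
    rw [pow_succ] at hn
    obtain ⟨m, rfl | rfl⟩ := Nat.even_or_odd' n <;> rw [hrec]
    · rw [coeff_expand_mul, map_sub, coeff_C_mul, coeff_C_mul, ih (by omega),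
        coeff_prod_one_sub_C_mul_X_pow_two_pow _ (by omega), hc_even]
    · rw [coeff_expand_of_not_dvd _ _ _ (by omega), hc_odd]

end GeneratingFunction

def oneUnborderedClosedForm (q n : ℕ) : ℤ :=
  if n = 0 then 1 else (-(q : ℤ)) ^ (Nat.digits 2 n).sum * (1 - (-2 : ℤ) ^ padicValNat 2 n)

lemma oneUnborderedClosedForm_two_mul (q m : ℕ) :
    oneUnborderedClosedForm q (2 * m) =
      3 * (-(q : ℤ)) ^ (Nat.digits 2 m).sum - 2 * oneUnborderedClosedForm q m := by
  rcases Nat.eq_zero_or_pos m with rfl | hm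
  · norm_num [oneUnborderedClosedForm]
  rw [oneUnborderedClosedForm, oneUnborderedClosedForm, if_neg (by omega), if_neg hm.ne',
    Nat.digits_two_sum_two_mul, padicValNat.mul two_ne_zero hm.ne', padicValNat_self, pow_add]
  ring

lemma oneUnborderedClosedForm_two_mul_add_one (q m : ℕ) :
    oneUnborderedClosedForm q (2 * m + 1) = 0 := by
  rw [oneUnborderedClosedForm, if_neg (by omega), padicValNat.eq_zero_of_not_dvd (by omega),
    pow_zero, sub_self, mul_zero]

/-- For `q ≥ 2`, with `β = ∑ b_m X^m ∈ ℤ[[X]]` the generating function of the numbers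
`b_m` of 1-unbordered words of length `m` over `ℤ/qℤ`, and with `h 0 = 1` and
`h n = (−q)^(s n)·(1 − (−2)^(k n))` for `n ≥ 1` (`s n` the binary digit sum, `k n` the
2-adic valuation), the coefficient of `X^n` in `β(X) · ∏_{j=0}^{K} (1 − q·X^(2^j))`
equals `h n` for every `K ≥ 0` and every `n < 2^(K+1)`. -/
theorem oneUnbordered_gf_closed_form (q : ℕ) (hq : 2 ≤ q)
    (β : PowerSeries ℤ)
    (hβ : β = PowerSeries.mk fun m => (countOneUnbordered q m : ℤ))
    (h : ℕ → ℤ)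
    (h0 : h 0 = 1)
    (hn : ∀ n : ℕ, 1 ≤ n →
      h n = (-(q : ℤ)) ^ (Nat.digits 2 n).sum * (1 - (-2 : ℤ) ^ (padicValNat 2 n)))
    (K : ℕ) (n : ℕ) (hnK : n < 2 ^ (K + 1)) :
    PowerSeries.coeff (R := ℤ) n
      (β * ∏ j ∈ Finset.range (K + 1),
        (1 - (q : PowerSeries ℤ) * PowerSeries.X ^ (2 ^ j))) = h n := by
  have hh : h = oneUnborderedClosedForm q := by
    funext n
    rcases Nat.eq_zero_or_pos n with rfl | hpos
    · rw [h0, oneUnborderedClosedForm, if_pos rfl]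
    · rw [hn n hpos, oneUnborderedClosedForm, if_neg hpos.ne']
  rw [hβ, hh, ← map_natCast PowerSeries.C q]
  exact coeff_mk_countOneUnbordered_mul_prod hq (oneUnborderedClosedForm_two_mul q)
    (oneUnborderedClosedForm_two_mul_add_one q) hnK
end

section
/- Let T be a tree polynomial of degree q. Then every non-leaf vertex v of T has exactly (q−2)·ℓ(v) + 1 children. -/
/-- A *tree polynomial* on a finite vertex type `V`: a finite rooted tree in which all
leaves have a common depth `n`, equipped with a critical/ordinary classification of
vertices, an order on the children of each vertex (encoded by `childIdx`, injective on
siblings), a simplicial self-map `f` compatible with this data, and a length function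
`ℓ` to the positive integers.

The tree is encoded by a `parent` function together with a `depth` function; children of
`v` are the non-root vertices `w` with `parent w = v`, and leaves are the childless
vertices. -/
structure TreePolynomial (V : Type*) [Fintype V] [DecidableEq V] where
  root : V
  parent : V → V
  depth : V → ℕ
  /-- the common depth of all leaves, the depth of the tree -/
  n : ℕ
  critical : V → Prop
  /-- the order on the children of each vertex: siblings are linearly ordered by
  `childIdx`. -/
  childIdx : V → ℕ
  /-- the simplicial self-map -/
  f : V → V
  /-- the length function -/
  ell : V → ℕ
  parent_root : parent root = root
  depth_root : depth root = 0
  depth_eq : ∀ v, v ≠ root → depth v = depth (parent v) + 1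
  depth_le : ∀ v, depth v ≤ n
  /-- all leaves (childless vertices) have the common depth `n` -/
  leaf_depth : ∀ v, (∀ w, w ≠ root → parent w ≠ v) → depth v = n
  root_critical : critical root
  /-- every critical non-leaf vertex has exactly one critical child -/
  crit_child : ∀ v, critical v → depth v < n →
    ∃! w, w ≠ root ∧ parent w = v ∧ critical w
  /-- ordinary vertices have no critical children -/
  ordinary_no_crit_child : ∀ v w, ¬ critical v → w ≠ root → parent w = v → ¬ critical w
  /-- `childIdx` is injective on siblings, so it linearly orders the children of each
  vertex -/
  childIdx_inj : ∀ w₁ w₂, w₁ ≠ root → w₂ ≠ root → parent w₁ = parent w₂ →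
    childIdx w₁ = childIdx w₂ → w₁ = w₂
  /-- the critical child of the root is first among its siblings -/
  root_crit_child_first : ∀ w w', w ≠ root → parent w = root → critical w →
    w' ≠ root → parent w' = root → childIdx w ≤ childIdx w'
  f_root : f root = root
  /-- `f v = root` for every child `v` of the root -/
  f_child_root : ∀ v, v ≠ root → parent v = root → f v = root
  /-- for `v` a child of a non-root vertex `w`, `f v` is a child of `f w` -/
  f_child : ∀ v, v ≠ root → parent v ≠ root → f v ≠ root ∧ parent (f v) = f (parent v)
  /-- for ordinary non-leaf `v`, `f` is injective on the children of `v` -/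
  f_ord_inj : ∀ v, ¬ critical v → ∀ w₁ w₂, w₁ ≠ root → w₂ ≠ root →
    parent w₁ = v → parent w₂ = v → f w₁ = f w₂ → w₁ = w₂
  /-- for ordinary non-leaf `v`, `f` maps the children of `v` onto the children of
  `f v` -/
  f_ord_surj : ∀ v, ¬ critical v → depth v < n → ∀ u, u ≠ root → parent u = f v →
    ∃ w, w ≠ root ∧ parent w = v ∧ f w = u
  /-- for ordinary non-leaf `v`, `f` is order-preserving on the children of `v` -/
  f_ord_mono : ∀ v, ¬ critical v → ∀ w₁ w₂, w₁ ≠ root → w₂ ≠ root →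
    parent w₁ = v → parent w₂ = v → childIdx w₁ ≤ childIdx w₂ →
    childIdx (f w₁) ≤ childIdx (f w₂)
  /-- for critical non-leaf non-root `v`, `f` maps the children of `v` onto the children
  of `f v` -/
  f_crit_surj : ∀ v, critical v → v ≠ root → depth v < n → ∀ u, u ≠ root →
    parent u = f v → ∃ w, w ≠ root ∧ parent w = v ∧ f w = u
  /-- for critical non-leaf non-root `v`, `f` is order non-decreasing on the children of
  `v` -/
  f_crit_mono : ∀ v, critical v → v ≠ root → ∀ w₁ w₂, w₁ ≠ root → w₂ ≠ root →
    parent w₁ = v → parent w₂ = v → childIdx w₁ ≤ childIdx w₂ →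
    childIdx (f w₁) ≤ childIdx (f w₂)
  /-- for critical non-leaf non-root `v` with critical child `c`, the map `f` on the
  children of `v` is 2-to-1 except that `c` is the unique child mapping to its image -/
  f_crit_fibers : ∀ v, critical v → v ≠ root → depth v < n →
    ∀ c, c ≠ root → parent c = v → critical c →
      ((∀ w, w ≠ root → parent w = v → f w = f c → w = c) ∧
       (∀ u, u ≠ root → parent u = f v → u ≠ f c →
         ∃ w₁ w₂, w₁ ≠ w₂ ∧ (w₁ ≠ root ∧ parent w₁ = v ∧ f w₁ = u) ∧
           (w₂ ≠ root ∧ parent w₂ = v ∧ f w₂ = u) ∧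
           ∀ w, w ≠ root → parent w = v → f w = u → w = w₁ ∨ w = w₂))
  ell_pos : ∀ v, 0 < ell v
  ell_root : ell root = 1
  ell_ordinary : ∀ v, ¬ critical v → ell v = ell (f v)
  ell_critical : ∀ v, critical v → v ≠ root → ell v = 2 * ell (f v)

namespace TreePolynomial

variable {V : Type*} [Fintype V] [DecidableEq V]

/-- The children of a vertex `v`: the non-root vertices whose parent is `v`. -/
def children (T : TreePolynomial V) (v : V) : Finset V :=
  Finset.univ.filter fun w => w ≠ T.root ∧ T.parent w = v

/-- The degree of a tree polynomial: one plus the number of children of the root. -/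
def degree (T : TreePolynomial V) : ℕ := 1 + (T.children T.root).card

end TreePolynomial

namespace TreePolynomial

variable {V : Type*} [Fintype V] [DecidableEq V]

lemma mem_children {T : TreePolynomial V} {v w : V} :
    w ∈ T.children v ↔ w ≠ T.root ∧ T.parent w = v := by
  simp [children]

lemma depth_f_aux (T : TreePolynomial V) (d : ℕ) :
    ∀ v, v ≠ T.root → T.depth v = d → T.depth (T.f v) + 1 = d := by
  induction d using Nat.strong_induction_on with
  | _ d ih =>
    intro v hv hd
    by_cases hp : T.parent v = T.root
    · have h1 : T.depth v = 1 := by rw [T.depth_eq v hv, hp, T.depth_root]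
      rw [T.f_child_root v hv hp, T.depth_root]
      omega
    · obtain ⟨hf, hpf⟩ := T.f_child v hv hp
      have hde := T.depth_eq v hv
      have hdp : T.depth (T.parent v) = d - 1 := by omega
      have hih := ih (d - 1) (by omega) (T.parent v) hp hdp
      have h2 : T.depth (T.f v) = T.depth (T.parent (T.f v)) + 1 := T.depth_eq _ hf
      rw [hpf] at h2
      omega

lemma depth_f (T : TreePolynomial V) (v : V) (hv : v ≠ T.root) :
    T.depth (T.f v) + 1 = T.depth v :=
  T.depth_f_aux (T.depth v) v hv rfl

lemma card_children_aux (T : TreePolynomial V) (q : ℕ) (hq : T.degree = q) (d : ℕ) :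
    ∀ v, T.depth v = d → T.depth v < T.n →
      ((T.children v).card : ℤ) = ((q : ℤ) - 2) * T.ell v + 1 := by
  classical
  induction d using Nat.strong_induction_on with
  | _ d ih =>
    intro v hd hv
    by_cases hr : v = T.root
    · subst hr
      rw [T.ell_root]
      have hq' : q = 1 + (T.children T.root).card := by rw [← hq]; rfl
      subst hq'
      push_cast
      ring
    · have hfd : T.depth (T.f v) + 1 = d := hd ▸ T.depth_f v hr
      have hfn : T.depth (T.f v) < T.n := by omega
      have hfv := ih (T.depth (T.f v)) (by omega) (T.f v) rfl hfn
      have hmap : ∀ w, w ∈ T.children v → T.f w ∈ T.children (T.f v) := by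
        intro w hw
        rw [mem_children] at hw ⊢
        obtain ⟨hw1, hw2⟩ := hw
        have := T.f_child w hw1 (by rw [hw2]; exact hr)
        exact ⟨this.1, by rw [this.2, hw2]⟩
      by_cases hc : T.critical v
      · -- critical case
        obtain ⟨c, ⟨hc1, hc2, hc3⟩, _⟩ := T.crit_child v hc hv
        have hcch : c ∈ T.children v := mem_children.2 ⟨hc1, hc2⟩
        have hfc : T.f c ∈ T.children (T.f v) := hmap c hcch
        obtain ⟨hfib1, hfib2⟩ := T.f_crit_fibers v hc hr hv c hc1 hc2 hc3
        -- children v as a biUnion of fibers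
        have hsplit : T.children v =
            (T.children (T.f v)).biUnion
              (fun u => (T.children v).filter (fun w => T.f w = u)) := by
          ext w
          simp only [Finset.mem_biUnion, Finset.mem_filter]
          constructor
          · intro hw; exact ⟨T.f w, hmap w hw, hw, rfl⟩
          · rintro ⟨u, _, hw, _⟩; exact hw
        have hdisj : ∀ u₁ ∈ T.children (T.f v), ∀ u₂ ∈ T.children (T.f v), u₁ ≠ u₂ →
            Disjoint ((T.children v).filter (fun w => T.f w = u₁))
              ((T.children v).filter (fun w => T.f w = u₂)) := by
          intro u₁ _ u₂ _ hne
          rw [Finset.disjoint_left]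
          intro w hw1 hw2
          rw [Finset.mem_filter] at hw1 hw2
          exact hne (hw1.2.symm.trans hw2.2)
        have hcard : (T.children v).card =
            ∑ u ∈ T.children (T.f v), ((T.children v).filter (fun w => T.f w = u)).card := by
          conv_lhs => rw [hsplit]
          exact Finset.card_biUnion hdisj
        -- fiber over f c is {c}
        have hfib_c : ((T.children v).filter (fun w => T.f w = T.f c)).card = 1 := by
          rw [Finset.card_eq_one]
          refine ⟨c, ?_⟩
          rw [Finset.eq_singleton_iff_unique_mem]
          constructor
          · exact Finset.mem_filter.2 ⟨hcch, rfl⟩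
          · intro w hw
            rw [Finset.mem_filter, mem_children] at hw
            exact hfib1 w hw.1.1 hw.1.2 hw.2
        -- other fibers have size 2
        have hfib_o : ∀ u ∈ T.children (T.f v), u ≠ T.f c →
            ((T.children v).filter (fun w => T.f w = u)).card = 2 := by
          intro u hu hune
          rw [mem_children] at hu
          obtain ⟨w₁, w₂, hw12, ⟨h1r, h1p, h1f⟩, ⟨h2r, h2p, h2f⟩, huniq⟩ :=
            hfib2 u hu.1 hu.2 hune
          rw [Finset.card_eq_two]
          refine ⟨w₁, w₂, hw12, ?_⟩
          ext w
          simp only [Finset.mem_filter, mem_children, Finset.mem_insert, Finset.mem_singleton]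
          constructor
          · rintro ⟨⟨ha, hb⟩, hcf⟩; exact huniq w ha hb hcf
          · rintro (rfl | rfl)
            · exact ⟨⟨h1r, h1p⟩, h1f⟩
            · exact ⟨⟨h2r, h2p⟩, h2f⟩
        have hsum : ∑ u ∈ T.children (T.f v),
            ((T.children v).filter (fun w => T.f w = u)).card
            = 1 + 2 * ((T.children (T.f v)).card - 1) := by
          rw [← Finset.add_sum_erase _ _ hfc, hfib_c]
          congr 1
          rw [Finset.sum_congr rfl (fun u hu => hfib_o u (Finset.mem_of_mem_erase hu)
            (Finset.ne_of_mem_erase hu)), Finset.sum_const, smul_eq_mul,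
            Finset.card_erase_of_mem hfc, mul_comm]
        have hpos : 1 ≤ (T.children (T.f v)).card := Finset.card_pos.2 ⟨T.f c, hfc⟩
        have hcv : T.ell v = 2 * T.ell (T.f v) := T.ell_critical v hc hr
        have : ((T.children v).card : ℤ) = 2 * ((T.children (T.f v)).card : ℤ) - 1 := by
          rw [hcard, hsum]; push_cast; omega
        rw [this, hfv, hcv]
        push_cast
        ring
      · -- ordinary case
        have hcard : (T.children v).card = (T.children (T.f v)).card := by
          apply Finset.card_bij (fun w _ => T.f w) hmap
          · intro w₁ hw₁ w₂ hw₂ hww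
            rw [mem_children] at hw₁ hw₂
            exact T.f_ord_inj v hc w₁ w₂ hw₁.1 hw₂.1 hw₁.2 hw₂.2 hww
          · intro u hu
            rw [mem_children] at hu
            obtain ⟨w, hw1, hw2, hw3⟩ := T.f_ord_surj v hc hv u hu.1 hu.2
            exact ⟨w, mem_children.2 ⟨hw1, hw2⟩, hw3⟩
        rw [hcard, hfv, T.ell_ordinary v hc]

end TreePolynomial

open TreePolynomial in
/-- Let `T` be a tree polynomial of degree `q`. Then every non-leaf vertex `v` of `T`
has exactly `(q − 2)·ℓ(v) + 1` children. -/
theorem TreePolynomial.card_children_eq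
    {V : Type*} [Fintype V] [DecidableEq V] (T : TreePolynomial V) (q : ℕ)
    (hq : T.degree = q) (v : V) (hv : T.depth v < T.n) :
    ((T.children v).card : ℤ) = ((q : ℤ) - 2) * T.ell v + 1 := by
  exact T.card_children_aux q hq (T.depth v) v rfl hv
end

section
/- Let n ≥ 1 and let m be an integer with ⌊n/2⌋ < m < n. Then there is no F-sequence F of length n+1 such that the least k ≥ 0 with F^k(n+1) = 0 equals m+1 (equivalently, such that ℓ(n+1) = 2^{m+1}). Via the correspondence between tree polynomials of depth n+1 and components of the tautological lamination at depth n, this expresses the Gap Theorem: N_q(n,m) = 0 for ⌊n/2⌋ < m < n. -/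
/-- The set `Opt F j` of *options* of an index `j` for a function `F : ℕ → ℕ`, defined
by strong recursion on `j` (well-defined for F-sequences since `F j < j` for `j ≥ 1`):
`Opt 0 = {0,1}`; for `j ≥ 1` with `F j = 0`, `Opt j = {j+1} ∪ ({0,1} \ {F (j+1)})`;
for `j ≥ 1` with `F j ≠ 0` and `F (j+1) ≠ F j + 1`, `Opt j = {j+1} ∪ Opt (F j)`;
for `j ≥ 1` with `F j ≠ 0` and `F (j+1) = F j + 1`,
`Opt j = {j+1} ∪ (Opt (F j) \ {F j + 1})`.
(The value when `j ≥ 1` but `F j ≥ j` is junk, never attained for F-sequences.) -/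
def Opt (F : ℕ → ℕ) (j : ℕ) : Finset ℕ :=
  if j = 0 then {0, 1}
  else if F j = 0 then insert (j + 1) ({0, 1} \ {F (j + 1)})
  else if h : F j < j then
    if F (j + 1) = F j + 1 then insert (j + 1) (Opt F (F j) \ {F j + 1})
    else insert (j + 1) (Opt F (F j))
  else ∅
termination_by j
decreasing_by all_goals exact h

/-- `F` is an *F-sequence of length `n`*: a function from `{0,…,n}` (encoded as a total
function on `ℕ`, only its values on `{0,…,n}` being constrained) with `F 0 = 0`,
`F 1 = 0` (when `n ≥ 1`), `F i < i` for `1 ≤ i ≤ n`, and `F (i+1) ∈ Opt F (F i)` for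
`1 ≤ i < n`. -/
def IsFSeq (n : ℕ) (F : ℕ → ℕ) : Prop :=
  F 0 = 0 ∧ (1 ≤ n → F 1 = 0) ∧ (∀ i, 1 ≤ i → i ≤ n → F i < i) ∧
    ∀ i, 1 ≤ i → i < n → F (i + 1) ∈ Opt F (F i)

/-- `kappa F i` is the least `k ≥ 0` with `F^[k] i = 0`. -/
noncomputable def kappa (F : ℕ → ℕ) (i : ℕ) : ℕ := sInf {k | F^[k] i = 0}

/-- `idx F n k` is the least index `i ≤ n` with `kappa F i = k` (when one exists). -/
noncomputable def idx (F : ℕ → ℕ) (n k : ℕ) : ℕ := sInf {i | i ≤ n ∧ kappa F i = k}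

lemma opt_le {F : ℕ → ℕ} : ∀ p, ∀ x ∈ Opt F p, x ≤ p + 1 := by
  intro p
  induction p using Nat.strong_induction_on with
  | _ p ih =>
    intro x hx
    rw [Opt] at hx
    split_ifs at hx with h0 h1 h2 h3
    · simp at hx; omega
    · simp [Finset.mem_insert, Finset.mem_sdiff] at hx; omega
    · rcases Finset.mem_insert.1 hx with h | h
      · omega
      · have := ih (F p) h2 x (Finset.mem_sdiff.1 h).1; omega
    · rcases Finset.mem_insert.1 hx with h | h
      · omega
      · have := ih (F p) h2 x h; omega
    · simp at hx

lemma diag_down {n : ℕ} {F : ℕ → ℕ} (hF : IsFSeq (n+1) F) :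
    ∀ j, j ≤ n + 1 → F j + 1 = j → ∀ t, 1 ≤ t → t ≤ j → F t + 1 = t := by
  obtain ⟨h0, h1, hlt, hopt⟩ := hF
  intro j
  induction j using Nat.strong_induction_on with
  | _ j ih =>
    intro hj hFj t ht1 htj
    rcases eq_or_lt_of_le htj with rfl | hlt'
    · exact hFj
    · have hj2 : 2 ≤ j := by omega
      have hmem : F j ∈ Opt F (F (j-1)) := by
        have h := hopt (j-1) (by omega) (by omega)
        have e : j - 1 + 1 = j := by omega
        rwa [e] at h
      have hle := opt_le _ _ hmem
      have hlt2 : F (j-1) < j - 1 := hlt (j-1) (by omega) (by omega)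
      have hstep : F (j-1) + 1 = j - 1 := by omega
      exact ih (j-1) (by omega) (by omega) hstep t ht1 (by omega)

lemma opt_diag {d : ℕ} {F : ℕ → ℕ}
    (hd : ∀ t, 1 ≤ t → t ≤ d → F t + 1 = t) :
    ∀ q, 1 ≤ q → q + 1 ≤ d → Opt F q = {q + 1, 0} := by
  intro q
  induction q using Nat.strong_induction_on with
  | _ q ih =>
    intro hq1 hqd
    rcases eq_or_lt_of_le hq1 with h1q | hq2
    · -- q = 1
      subst h1q
      have h1 : F 1 = 0 := by have := hd 1 le_rfl (by omega); omega
      have h2 : F 2 = 1 := by have := hd 2 (by omega) (by omega); omega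
      rw [Opt, if_neg (by omega), if_pos h1]
      have : F (1 + 1) = 1 := h2
      rw [this]
      ext x
      simp [Finset.mem_insert, Finset.mem_sdiff]
      all_goals omega
    · have hFq : F q + 1 = q := hd q (by omega) (by omega)
      have hFq1 : F (q+1) = q := by have := hd (q+1) (by omega) hqd; omega
      have hIH : Opt F (F q) = {F q + 1, 0} :=
        ih (F q) (by omega) (by omega) (by omega)
      rw [Opt, if_neg (by omega), if_neg (by omega : ¬ F q = 0),
        dif_pos (by omega : F q < q), if_pos (by omega : F (q+1) = F q + 1), hIH]
      ext x
      simp [Finset.mem_insert, Finset.mem_sdiff]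
      all_goals omega

lemma U_lemma {n d : ℕ} {F : ℕ → ℕ} (hF : IsFSeq (n+1) F) (hd1 : 1 ≤ d)
    (hd : ∀ t, 1 ≤ t → t ≤ d → F t + 1 = t)
    (hmax : ∀ i, d + 1 ≤ i → i ≤ n + 1 → F i + 1 ≠ i) :
    ∀ i, d + 1 ≤ i → i ≤ n + 1 → F i + d + 1 ≤ i := by
  obtain ⟨h0, h1, hlt, hopt⟩ := hF
  intro i
  induction i using Nat.strong_induction_on with
  | _ i ih =>
    intro hdi hin
    have hi2 : 2 ≤ i := by omega
    have hmem : F i ∈ Opt F (F (i-1)) := by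
      have h := hopt (i-1) (by omega) (by omega)
      have e : i - 1 + 1 = i := by omega
      rwa [e] at h
    by_cases hcase : F (i-1) + 1 = i - 1
    · have hid : i - 1 ≤ d := by
        by_contra hc
        exact hmax (i-1) (by omega) (by omega) hcase
      have hide : i = d + 1 := by omega
      rcases Nat.eq_or_lt_of_le hd1 with h1d | h2d
      · have hz : F (i-1) = 0 := by omega
        rw [hz, Opt, if_pos rfl] at hmem
        simp at hmem
        have h5 : F i + 1 ≠ i := hmax i hdi hin
        omega
      · have hFim : F (i-1) = d - 1 := by omega
        have hod := opt_diag hd (d-1) (by omega) (by omega)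
        rw [hFim, hod] at hmem
        simp [Finset.mem_insert] at hmem
        have h5 : F i + 1 ≠ i := hmax i hdi hin
        omega
    · have hi1d : d + 1 ≤ i - 1 := by
        by_contra hc
        have he : i - 1 = d := by omega
        exact hcase (by rw [he]; exact hd d hd1 le_rfl)
      have hIH := ih (i-1) (by omega) hi1d (by omega)
      have := opt_le _ _ hmem
      omega

lemma iter_zero {F : ℕ → ℕ} (h0 : F 0 = 0) : ∀ k, F^[k] 0 = 0 := by
  intro k; induction k with
  | zero => rfl
  | succ k ih => rw [Function.iterate_succ_apply, h0, ih]

lemma reach_zero {n : ℕ} {F : ℕ → ℕ} (h0 : F 0 = 0)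
    (hlt : ∀ i, 1 ≤ i → i ≤ n + 1 → F i < i) :
    ∀ i, i ≤ n + 1 → F^[i] i = 0 := by
  intro i
  induction i using Nat.strong_induction_on with
  | _ i ih =>
    intro hin
    rcases Nat.eq_zero_or_pos i with rfl | hi
    · rfl
    · have hFi : F i < i := hlt i hi hin
      have hh1 : F^[F i] (F i) = 0 := ih (F i) hFi (by omega)
      obtain ⟨j, rfl⟩ : ∃ j, i = j + 1 := ⟨i - 1, by omega⟩
      calc F^[j+1] (j+1) = F^[j] (F (j+1)) := Function.iterate_succ_apply F j (j+1)
        _ = F^[j - F (j+1) + F (j+1)] (F (j+1)) := by congr 1; omega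
        _ = F^[j - F (j+1)] (F^[F (j+1)] (F (j+1))) := Function.iterate_add_apply F _ _ _
        _ = 0 := by rw [hh1]; exact iter_zero h0 _

lemma kappa_zero {F : ℕ → ℕ} : kappa F 0 = 0 := by
  have h : (0:ℕ) ∈ {k | F^[k] (0:ℕ) = 0} := by simp
  exact Nat.sInf_eq_zero.2 (Or.inl h)

lemma kappa_rec {F : ℕ → ℕ} {i : ℕ} (hi : i ≠ 0) (hne : ∃ k, F^[k] i = 0) :
    kappa F i = kappa F (F i) + 1 := by
  have hne' : {k | F^[k] (F i) = 0}.Nonempty := by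
    obtain ⟨k, hk⟩ := hne
    rcases Nat.eq_zero_or_pos k with rfl | hk0
    · simp at hk; exact absurd hk hi
    · obtain ⟨k', rfl⟩ : ∃ k', k = k' + 1 := ⟨k - 1, by omega⟩
      refine ⟨k', ?_⟩
      show F^[k'] (F i) = 0
      rw [← Function.iterate_succ_apply]; exact hk
  have hmem' : F^[kappa F (F i)] (F i) = 0 := Nat.sInf_mem hne'
  have hmem : (kappa F (F i) + 1) ∈ {k | F^[k] i = 0} := by
    show F^[kappa F (F i) + 1] i = 0
    rw [Function.iterate_succ_apply]; exact hmem'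
  refine le_antisymm (Nat.sInf_le hmem) ?_
  show kappa F (F i) + 1 ≤ kappa F i
  have hSne : {k | F^[k] i = 0}.Nonempty := hne
  have hmemS : F^[kappa F i] i = 0 := Nat.sInf_mem hSne
  have hk0 : kappa F i ≠ 0 := by
    intro h; rw [h] at hmemS; simp at hmemS; exact hi hmemS
  have h2 : F^[kappa F i - 1] (F i) = 0 := by
    rwa [show kappa F i = (kappa F i - 1) + 1 by omega,
      Function.iterate_succ_apply] at hmemS
  have h3 : kappa F (F i) ≤ kappa F i - 1 := Nat.sInf_le h2
  omega

lemma kappa_le {n : ℕ} {F : ℕ → ℕ} (h0 : F 0 = 0)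
    (hlt : ∀ i, 1 ≤ i → i ≤ n + 1 → F i < i) :
    ∀ i, i ≤ n + 1 → kappa F i ≤ i := by
  intro i
  induction i using Nat.strong_induction_on with
  | _ i ih =>
    intro hin
    rcases Nat.eq_zero_or_pos i with rfl | hi
    · simp [kappa_zero]
    · have hFi := hlt i hi hin
      rw [kappa_rec (by omega) ⟨i, reach_zero h0 hlt i hin⟩]
      have := ih (F i) hFi (by omega)
      omega

lemma kappa_diag {n d : ℕ} {F : ℕ → ℕ} (h0 : F 0 = 0)
    (hlt : ∀ i, 1 ≤ i → i ≤ n + 1 → F i < i) (hdn : d ≤ n + 1)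
    (hd : ∀ t, 1 ≤ t → t ≤ d → F t + 1 = t) :
    ∀ q, q ≤ d → kappa F q = q := by
  intro q
  induction q with
  | zero => intro _; exact kappa_zero
  | succ q ih =>
    intro hqd
    rw [kappa_rec (by omega) ⟨q+1, reach_zero h0 hlt (q+1) (by omega)⟩]
    have hFq : F (q+1) = q := by have := hd (q+1) (by omega) hqd; omega
    rw [hFq, ih (by omega)]

/-- **Gap theorem.** Let `n ≥ 1` and let `m` be an integer with `⌊n/2⌋ < m < n`. Then
there is no F-sequence `F` of length `n+1` such that the least `k ≥ 0` with
`F^[k] (n+1) = 0` equals `m+1` (equivalently, such that `ℓ(n+1) = 2^(m+1)`). Via the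
correspondence between tree polynomials of depth `n+1` and components of the
tautological lamination at depth `n`, this expresses `N_q(n,m) = 0` for
`⌊n/2⌋ < m < n`. -/
theorem gap_theorem (n m : ℕ) (hn : 1 ≤ n) (hm1 : n / 2 < m) (hm2 : m < n) :
    ¬ ∃ F : ℕ → ℕ, IsFSeq (n + 1) F ∧ kappa F (n + 1) = m + 1 := by
  rintro ⟨F, hF, hK⟩
  obtain ⟨h0, h1, hlt, hopt⟩ := hF
  have h1' : F 1 = 0 := h1 (by omega)
  by_cases hdiag : ∀ t, 1 ≤ t → t ≤ n + 1 → F t + 1 = t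
  · have := kappa_diag h0 hlt le_rfl hdiag (n+1) le_rfl
    omega
  · push_neg at hdiag
    set S : Set ℕ := {t | 1 ≤ t ∧ t ≤ n + 1 ∧ F t + 1 ≠ t} with hS
    have hSne : S.Nonempty := by
      obtain ⟨t, ht1, ht2, ht3⟩ := hdiag
      exact ⟨t, ht1, ht2, ht3⟩
    have ht0 := Nat.sInf_mem hSne
    set t0 := sInf S with ht0def
    obtain ⟨ht01, ht02, ht03⟩ := ht0
    have ht0ne1 : t0 ≠ 1 := by
      intro h; rw [h] at ht03; omega
    set d := t0 - 1 with hddef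
    have hd1 : 1 ≤ d := by omega
    have hdn : d ≤ n + 1 := by omega
    have hd : ∀ t, 1 ≤ t → t ≤ d → F t + 1 = t := by
      intro t ht1' htd
      by_contra hc
      have : t ∈ S := ⟨ht1', by omega, hc⟩
      have := Nat.sInf_le this
      omega
    have hmax : ∀ i, d + 1 ≤ i → i ≤ n + 1 → F i + 1 ≠ i := by
      intro i hdi hin hc
      have := diag_down ⟨h0, h1, hlt, hopt⟩ i hin hc t0 (by omega) (by omega)
      exact ht03 this
    have hW : ∀ i, i ≤ n + 1 → kappa F i = i ∨ 2 * kappa F i ≤ i + 1 := by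
      intro i
      induction i using Nat.strong_induction_on with
      | _ i ih =>
        intro hin
        by_cases hid : i ≤ d
        · left; exact kappa_diag h0 hlt hdn hd i hid
        · have hU := U_lemma ⟨h0, h1, hlt, hopt⟩ hd1 hd hmax i (by omega) hin
          have hFlt : F i < i := hlt i (by omega) hin
          have hrec := kappa_rec (F := F) (i := i) (by omega)
            ⟨i, reach_zero h0 hlt i hin⟩
          rcases ih (F i) (by omega) (by omega) with hj | hj
          · have hjd : F i ≤ d := by
              by_contra hc
              have hU2 := U_lemma ⟨h0, h1, hlt, hopt⟩ hd1 hd hmax (F i)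
                (by omega) (by omega)
              have h9 : F (F i) < F i := hlt (F i) (by omega) (by omega)
              have h10 : kappa F (F (F i)) ≤ F (F i) :=
                kappa_le h0 hlt (F (F i)) (by omega)
              have hrec2 := kappa_rec (F := F) (i := F i) (by omega)
                ⟨F i, reach_zero h0 hlt (F i) (by omega)⟩
              omega
            right; omega
          · right; omega
    rcases hW (n+1) le_rfl with h | h <;> omega
end
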